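/- Completeness for sets of pomsets with boxes: for terms e, f (with 0, +), the interpretations ⟦e⟧ and ⟦f⟧ are equal up to isomorphism (each poset in one is isomorphic to one in the other) if and only if e = f is derivable in the bisemiring-with-boxes theory. -/

import Mathlib

/-- A poset with boxes over an alphabet `A`. -/
structure PB (A : Type) : Type 1 where
  Ev : Type
  le : Ev → Ev → Prop
  le_refl : ∀ e, le e e
  le_trans : ∀ e f g, le e f → le f g → le e g
  le_antisymm : ∀ e f, le e f → le f e → e = f
  lab : Ev → A
  boxes : Set (Set Ev)
  boxes_ne : ∀ B ∈ boxes, B.Nonempty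

/-- A homomorphism of posets with boxes: a bijection preserving labels,
order and boxes. -/
structure Hom {A : Type} (P Q : PB A) where
  toFun : P.Ev → Q.Ev
  bij : Function.Bijective toFun
  lab_eq : ∀ e, Q.lab (toFun e) = P.lab e
  mono : ∀ e f, P.le e f → Q.le (toFun e) (toFun f)
  box_pres : ∀ B ∈ P.boxes, toFun '' B ∈ Q.boxes

/-- Order-reflecting homomorphism. -/
def Hom.OrdRefl {A : Type} {P Q : PB A} (φ : Hom P Q) : Prop :=
  ∀ e f, Q.le (φ.toFun e) (φ.toFun f) → P.le e f

/-- Box-reflecting homomorphism. -/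
def Hom.BoxRefl {A : Type} {P Q : PB A} (φ : Hom P Q) : Prop :=
  ∀ B : Set P.Ev, φ.toFun '' B ∈ Q.boxes → B ∈ P.boxes

/-- Isomorphism of posets with boxes. -/
def Iso {A : Type} (P Q : PB A) : Prop :=
  ∃ φ : Hom P Q, φ.OrdRefl ∧ φ.BoxRefl

/-- `Subsume P Q` means `P ⊑ Q` : there is a homomorphism from `Q` to `P`. -/
def Subsume {A : Type} (P Q : PB A) : Prop := Nonempty (Hom Q P)

/-- The empty poset with boxes. -/
def onePB (A : Type) : PB A where
  Ev := PEmpty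
  le := fun _ _ => True
  le_refl := fun e => trivial
  le_trans := fun _ _ _ _ _ => trivial
  le_antisymm := fun e => e.elim
  lab := fun e => e.elim
  boxes := ∅
  boxes_ne := fun _ h => absurd h (Set.notMem_empty _)

/-- The atomic poset with boxes, with a single event labelled `a`. -/
def atomPB {A : Type} (a : A) : PB A where
  Ev := PUnit
  le := fun _ _ => True
  le_refl := fun _ => trivial
  le_trans := fun _ _ _ _ _ => trivial
  le_antisymm := fun _ _ _ _ => rfl
  lab := fun _ => a
  boxes := ∅
  boxes_ne := fun _ h => absurd h (Set.notMem_empty _)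

/-- The order of a sequential composition on the disjoint union of events. -/
def seqLE {A : Type} (P Q : PB A) : P.Ev ⊕ Q.Ev → P.Ev ⊕ Q.Ev → Prop
  | .inl a, .inl b => P.le a b
  | .inr a, .inr b => Q.le a b
  | .inl _, .inr _ => True
  | .inr _, .inl _ => False

/-- Sequential composition of posets with boxes. -/
def seqPB {A : Type} (P Q : PB A) : PB A where
  Ev := P.Ev ⊕ Q.Ev
  le := seqLE P Q
  le_refl := fun e => by cases e <;> simp [seqLE, PB.le_refl]
  le_trans := fun e f g hef hfg => by
    cases e <;> cases f <;> cases g <;>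
      simp_all [seqLE] <;>
      first
        | exact P.le_trans _ _ _ hef hfg
        | exact Q.le_trans _ _ _ hef hfg
  le_antisymm := fun e f hef hfe => by
    cases e <;> cases f <;> simp_all [seqLE]
    · exact P.le_antisymm _ _ hef hfe
    · exact Q.le_antisymm _ _ hef hfe
  lab := Sum.elim P.lab Q.lab
  boxes := (Set.image Sum.inl '' P.boxes) ∪ (Set.image Sum.inr '' Q.boxes)
  boxes_ne := by
    rintro B (⟨C, hC, rfl⟩ | ⟨C, hC, rfl⟩)
    · exact ((P.boxes_ne C hC).image _)
    · exact ((Q.boxes_ne C hC).image _)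

/-- The order of a parallel composition on the disjoint union of events. -/
def parLE {A : Type} (P Q : PB A) : P.Ev ⊕ Q.Ev → P.Ev ⊕ Q.Ev → Prop
  | .inl a, .inl b => P.le a b
  | .inr a, .inr b => Q.le a b
  | .inl _, .inr _ => False
  | .inr _, .inl _ => False

/-- Parallel composition of posets with boxes. -/
def parPB {A : Type} (P Q : PB A) : PB A where
  Ev := P.Ev ⊕ Q.Ev
  le := parLE P Q
  le_refl := fun e => by cases e <;> simp [parLE, PB.le_refl]
  le_trans := fun e f g hef hfg => by
    cases e <;> cases f <;> cases g <;>
      simp_all [parLE] <;>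
      first
        | exact P.le_trans _ _ _ hef hfg
        | exact Q.le_trans _ _ _ hef hfg
  le_antisymm := fun e f hef hfe => by
    cases e <;> cases f <;> simp_all [parLE]
    · exact P.le_antisymm _ _ hef hfe
    · exact Q.le_antisymm _ _ hef hfe
  lab := Sum.elim P.lab Q.lab
  boxes := (Set.image Sum.inl '' P.boxes) ∪ (Set.image Sum.inr '' Q.boxes)
  boxes_ne := by
    rintro B (⟨C, hC, rfl⟩ | ⟨C, hC, rfl⟩)
    · exact ((P.boxes_ne C hC).image _)
    · exact ((Q.boxes_ne C hC).image _)

/-- Boxing: add the full (nonempty) set of events as a box. -/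
def boxPB {A : Type} (P : PB A) : PB A where
  Ev := P.Ev
  le := P.le
  le_refl := P.le_refl
  le_trans := P.le_trans
  le_antisymm := P.le_antisymm
  lab := P.lab
  boxes := P.boxes ∪ {B | B = Set.univ ∧ B.Nonempty}
  boxes_ne := by
    rintro B (hB | ⟨rfl, hne⟩)
    · exact P.boxes_ne B hB
    · exact hne

/-- Restriction of a poset with boxes to a subset of its events. -/
def restrictPB {A : Type} (P : PB A) (S : Set P.Ev) : PB A where
  Ev := S
  le := fun x y => P.le x.1 y.1
  le_refl := fun x => P.le_refl x.1
  le_trans := fun x y z => P.le_trans x.1 y.1 z.1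
  le_antisymm := fun x y h h' => Subtype.ext (P.le_antisymm _ _ h h')
  lab := fun x => P.lab x.1
  boxes := {B | Subtype.val '' B ∈ P.boxes}
  boxes_ne := fun B hB => by
    rcases P.boxes_ne _ hB with ⟨x, ⟨y, hy, rfl⟩⟩
    exact ⟨y, hy⟩

/-- Forbidden pattern P1 (the `N` pattern). -/
def hasP1 {A : Type} (P : PB A) : Prop :=
  ∃ e1 e2 e3 e4 : P.Ev,
    P.le e1 e3 ∧ P.le e2 e3 ∧ P.le e2 e4 ∧
    ¬ P.le e1 e4 ∧ ¬ P.le e2 e1 ∧ ¬ P.le e4 e3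

/-- Forbidden pattern P2 (overlapping non-nested boxes). -/
def hasP2 {A : Type} (P : PB A) : Prop :=
  ∃ (Bx Cx : Set P.Ev) (e1 e2 e3 : P.Ev),
    Bx ∈ P.boxes ∧ Cx ∈ P.boxes ∧
    e1 ∈ Bx \ Cx ∧ e2 ∈ Bx ∩ Cx ∧ e3 ∈ Cx \ Bx

/-- Forbidden pattern P3. -/
def hasP3 {A : Type} (P : PB A) : Prop :=
  ∃ (Bx : Set P.Ev) (e1 e2 e3 : P.Ev),
    Bx ∈ P.boxes ∧ e1 ∉ Bx ∧ e2 ∈ Bx ∧ e3 ∈ Bx ∧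
    P.le e1 e2 ∧ ¬ P.le e1 e3

/-- Forbidden pattern P4. -/
def hasP4 {A : Type} (P : PB A) : Prop :=
  ∃ (Bx : Set P.Ev) (e1 e2 e3 : P.Ev),
    Bx ∈ P.boxes ∧ e1 ∉ Bx ∧ e2 ∈ Bx ∧ e3 ∈ Bx ∧
    P.le e2 e1 ∧ ¬ P.le e3 e1

/-- A set of events is non-trivial if it is neither empty nor everything. -/
def NonTrivial {A : Type} (P : PB A) (S : Set P.Ev) : Prop :=
  S ≠ ∅ ∧ S ≠ Set.univ

/-- A set of events is nested if every box is contained in it or disjoint from it. -/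
def Nested {A : Type} (P : PB A) (S : Set P.Ev) : Prop :=
  ∀ B ∈ P.boxes, B ⊆ S ∨ B ∩ S = ∅

/-- A set of events is prefix if every event in it is below every event outside. -/
def IsPrefix {A : Type} (P : PB A) (S : Set P.Ev) : Prop :=
  ∀ e ∈ S, ∀ f ∉ S, P.le e f

/-- A set of events is isolated if its events are incomparable with outside events. -/
def Isolated {A : Type} (P : PB A) (S : Set P.Ev) : Prop :=
  ∀ e ∈ S, ∀ f ∉ S, ¬ P.le e f ∧ ¬ P.le f e
/-- Series–parallel terms. -/
inductive Term (A : Type) : Type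
  | one : Term A
  | atom (a : A) : Term A
  | seq (s t : Term A) : Term A
  | par (s t : Term A) : Term A
  | box (s : Term A) : Term A

/-- Interpretation of terms as posets with boxes. -/
def semT {A : Type} : Term A → PB A
  | .one => onePB A
  | .atom a => atomPB a
  | .seq s t => seqPB (semT s) (semT t)
  | .par s t => parPB (semT s) (semT t)
  | .box s => boxPB (semT s)

/-- Derivability in the equational theory of bimonoids with boxes. -/
inductive BimEq {A : Type} : Term A → Term A → Prop
  | seq_assoc (s t u : Term A) : BimEq (.seq s (.seq t u)) (.seq (.seq s t) u)
  | par_assoc (s t u : Term A) : BimEq (.par s (.par t u)) (.par (.par s t) u)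
  | par_comm (s t : Term A) : BimEq (.par s t) (.par t s)
  | seq_unit_l (s : Term A) : BimEq (.seq .one s) s
  | seq_unit_r (s : Term A) : BimEq (.seq s .one) s
  | par_unit (s : Term A) : BimEq (.par .one s) s
  | box_box (s : Term A) : BimEq (.box (.box s)) (.box s)
  | box_one : BimEq (.box .one) .one
  | refl (s : Term A) : BimEq s s
  | symm {s t : Term A} : BimEq s t → BimEq t s
  | trans {s t u : Term A} : BimEq s t → BimEq t u → BimEq s u
  | seq_congr {s s' t t' : Term A} : BimEq s s' → BimEq t t' → BimEq (.seq s t) (.seq s' t')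
  | par_congr {s s' t t' : Term A} : BimEq s s' → BimEq t t' → BimEq (.par s t) (.par s' t')
  | box_congr {s s' : Term A} : BimEq s s' → BimEq (.box s) (.box s')

/-- Derivability in the inequational theory of concurrent monoids with boxes:
bimonoid axioms (in both directions) together with exchange and box elimination. -/
inductive CMLe {A : Type} : Term A → Term A → Prop
  | of_eq {s t : Term A} : BimEq s t → CMLe s t
  | exchange (s t u v : Term A) :
      CMLe (.seq (.par s t) (.par u v)) (.par (.seq s u) (.seq t v))
  | box_le (s : Term A) : CMLe (.box s) s
  | refl (s : Term A) : CMLe s s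
  | trans {s t u : Term A} : CMLe s t → CMLe t u → CMLe s u
  | seq_congr {s s' t t' : Term A} : CMLe s s' → CMLe t t' → CMLe (.seq s t) (.seq s' t')
  | par_congr {s s' t t' : Term A} : CMLe s s' → CMLe t t' → CMLe (.par s t) (.par s' t')
  | box_congr {s s' : Term A} : CMLe s s' → CMLe (.box s) (.box s')
/-- Terms with failure `0` and non-deterministic choice `+`. -/
inductive Term2 (A : Type) : Type
  | zero : Term2 A
  | one : Term2 A
  | atom (a : A) : Term2 A
  | seq (e f : Term2 A) : Term2 A
  | par (e f : Term2 A) : Term2 A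
  | plus (e f : Term2 A) : Term2 A
  | box (e : Term2 A) : Term2 A

/-- Embedding of series–parallel terms into the extended syntax. -/
def Term.toTerm2 {A : Type} : Term A → Term2 A
  | .one => .one
  | .atom a => .atom a
  | .seq s t => .seq s.toTerm2 t.toTerm2
  | .par s t => .par s.toTerm2 t.toTerm2
  | .box s => .box s.toTerm2

/-- Interpretation of extended terms as sets of posets with boxes. -/
def semT2 {A : Type} : Term2 A → Set (PB A)
  | .zero => ∅
  | .one => {onePB A}
  | .atom a => {atomPB a}
  | .seq e f => Set.image2 seqPB (semT2 e) (semT2 f)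
  | .par e f => Set.image2 parPB (semT2 e) (semT2 f)
  | .plus e f => semT2 e ∪ semT2 f
  | .box e => boxPB '' semT2 e

/-- Derivability in the equational theory of bisemirings with boxes. -/
inductive BSEq {A : Type} : Term2 A → Term2 A → Prop
  | seq_assoc (s t u : Term2 A) : BSEq (.seq s (.seq t u)) (.seq (.seq s t) u)
  | par_assoc (s t u : Term2 A) : BSEq (.par s (.par t u)) (.par (.par s t) u)
  | par_comm (s t : Term2 A) : BSEq (.par s t) (.par t s)
  | seq_unit_l (s : Term2 A) : BSEq (.seq .one s) s
  | seq_unit_r (s : Term2 A) : BSEq (.seq s .one) s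
  | par_unit (s : Term2 A) : BSEq (.par .one s) s
  | box_box (s : Term2 A) : BSEq (.box (.box s)) (.box s)
  | box_one : BSEq (.box .one) .one
  | plus_assoc (e f g : Term2 A) : BSEq (.plus e (.plus f g)) (.plus (.plus e f) g)
  | plus_comm (e f : Term2 A) : BSEq (.plus e f) (.plus f e)
  | plus_idem (e : Term2 A) : BSEq (.plus e e) e
  | plus_unit (e : Term2 A) : BSEq (.plus .zero e) e
  | seq_zero_l (e : Term2 A) : BSEq (.seq .zero e) .zero
  | seq_zero_r (e : Term2 A) : BSEq (.seq e .zero) .zero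
  | par_zero (e : Term2 A) : BSEq (.par .zero e) .zero
  | seq_distr_l (e f g : Term2 A) :
      BSEq (.seq e (.plus f g)) (.plus (.seq e f) (.seq e g))
  | seq_distr_r (e f g : Term2 A) :
      BSEq (.seq (.plus e f) g) (.plus (.seq e g) (.seq f g))
  | par_distr (e f g : Term2 A) :
      BSEq (.par e (.plus f g)) (.plus (.par e f) (.par e g))
  | box_zero : BSEq (A := A) (.box .zero) .zero
  | box_plus (e f : Term2 A) : BSEq (.box (.plus e f)) (.plus (.box e) (.box f))
  | refl (e : Term2 A) : BSEq e e
  | symm {e f : Term2 A} : BSEq e f → BSEq f e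
  | trans {e f g : Term2 A} : BSEq e f → BSEq f g → BSEq e g
  | seq_congr {e e' f f' : Term2 A} : BSEq e e' → BSEq f f' → BSEq (.seq e f) (.seq e' f')
  | par_congr {e e' f f' : Term2 A} : BSEq e e' → BSEq f f' → BSEq (.par e f) (.par e' f')
  | plus_congr {e e' f f' : Term2 A} : BSEq e e' → BSEq f f' → BSEq (.plus e f) (.plus e' f')
  | box_congr {e e' : Term2 A} : BSEq e e' → BSEq (.box e) (.box e')

/-!
Soundness is checked in the quotient `IsoClass A` of posets with boxes by isomorphism: the
operations descend to it, `⟦e⟧` becomes a set of classes, and every bisemiring axiom becomes an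
identity between images of sets under the bimonoid operations on classes.

For completeness, every term is provably the sum of its series–parallel summands, and by
idempotence and commutativity of `+` two such sums with the same classes are provably equal as
soon as isomorphic series–parallel terms are equal in the bimonoid theory. For the latter, terms
are factored into sequential lists of sequentially prime factors and parallel lists of parallel
prime ones. In `P · Q` with `P` sequentially prime, every nonempty prefix nested set contains `P`,
so an isomorphism of sequential products maps first factor onto first factor; in `P ∥ Q` with `P`
parallel prime, an isolated nested set meeting `P` contains it, so an isomorphism of parallel
products maps the first factor onto some factor. Peeling off factors, and stripping outer boxes
whose contents are not boxed at the top, an induction on size concludes.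
-/

open Set

section

variable {A : Type}

/-! ### Isomorphisms -/

theorem Equiv.image_eq_univ_iff {α β : Type} (e : α ≃ β) {B : Set α} :
    e '' B = univ ↔ B = univ := by
  rw [← image_univ_of_surjective e.surjective, e.image_eq_iff_eq]

theorem mem_boxes_iff_of_image_eq {α β : Type} (e : α ≃ β) {X : Set (Set α)}
    {Y : Set (Set β)} (h : image e '' X = Y) (B : Set α) : B ∈ X ↔ e '' B ∈ Y :=
  h ▸ (image_injective.2 e.injective).mem_set_image.symm

def sumBoxes {α β : Type} (X : Set (Set α)) (Y : Set (Set β)) : Set (Set (α ⊕ β)) :=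
  image Sum.inl '' X ∪ image Sum.inr '' Y

section SumBoxes

variable {α β γ α' β' : Type} (X : Set (Set α)) (Y : Set (Set β)) (Z : Set (Set γ))

theorem image_sumCongr_sumBoxes (e₁ : α ≃ α') (e₂ : β ≃ β') :
    image (Equiv.sumCongr e₁ e₂) '' sumBoxes X Y =
      sumBoxes (image e₁ '' X) (image e₂ '' Y) := by
  simp [sumBoxes, image_union, image_image]

theorem image_sumAssoc_sumBoxes :
    image (Equiv.sumAssoc α β γ) '' sumBoxes (sumBoxes X Y) Z = sumBoxes X (sumBoxes Y Z) := by
  simp [sumBoxes, image_union, image_image, union_assoc]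

theorem image_sumComm_sumBoxes :
    image (Equiv.sumComm α β) '' sumBoxes X Y = sumBoxes Y X := by
  simp [sumBoxes, image_union, image_image, union_comm]

theorem image_emptySum_sumBoxes [IsEmpty α] :
    image (Equiv.emptySum α β) '' sumBoxes ∅ Y = Y := by
  simp [sumBoxes, image_image]

theorem image_sumEmpty_sumBoxes [IsEmpty β] :
    image (Equiv.sumEmpty α β) '' sumBoxes X ∅ = X := by
  simp [sumBoxes, image_image]

end SumBoxes

theorem PB.empty_notMem_boxes (P : PB A) : ∅ ∉ P.boxes :=
  fun h => (P.boxes_ne ∅ h).ne_empty rfl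

theorem PB.boxes_eq_empty_of_isEmpty (P : PB A) [IsEmpty P.Ev] : P.boxes = ∅ :=
  eq_empty_of_forall_notMem fun B hB => (P.boxes_ne B hB).ne_empty (eq_empty_of_isEmpty B)

theorem seqPB_boxes (P Q : PB A) : (seqPB P Q).boxes = sumBoxes P.boxes Q.boxes := rfl

theorem parPB_boxes (P Q : PB A) : (parPB P Q).boxes = sumBoxes P.boxes Q.boxes := rfl

structure PBEquiv (P Q : PB A) where
  toEquiv : P.Ev ≃ Q.Ev
  le_iff : ∀ x y, P.le x y ↔ Q.le (toEquiv x) (toEquiv y)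
  lab_eq : ∀ x, Q.lab (toEquiv x) = P.lab x
  mem_boxes_iff : ∀ B, B ∈ P.boxes ↔ toEquiv '' B ∈ Q.boxes

infixl:25 " ≃pb " => PBEquiv

namespace PBEquiv

def refl (P : PB A) : P ≃pb P where
  toEquiv := Equiv.refl _
  le_iff _ _ := Iff.rfl
  lab_eq _ := rfl
  mem_boxes_iff B := by simp

def symm {P Q : PB A} (φ : P ≃pb Q) : Q ≃pb P where
  toEquiv := φ.toEquiv.symm
  le_iff x y := by simp [φ.le_iff]
  lab_eq x := by simpa using (φ.lab_eq (φ.toEquiv.symm x)).symm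
  mem_boxes_iff B := by rw [φ.mem_boxes_iff, Equiv.image_symm_image]

def trans {P Q R : PB A} (φ : P ≃pb Q) (ψ : Q ≃pb R) : P ≃pb R where
  toEquiv := φ.toEquiv.trans ψ.toEquiv
  le_iff x y := (φ.le_iff x y).trans (ψ.le_iff _ _)
  lab_eq x := (ψ.lab_eq _).trans (φ.lab_eq x)
  mem_boxes_iff B := by rw [φ.mem_boxes_iff, ψ.mem_boxes_iff, image_image]; rfl

end PBEquiv

theorem iso_iff_nonempty_pbEquiv {P Q : PB A} : Iso P Q ↔ Nonempty (P ≃pb Q) := by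
  constructor
  · rintro ⟨φ, hle, hbox⟩
    exact ⟨⟨Equiv.ofBijective φ.toFun φ.bij, fun x y => ⟨φ.mono x y, hle x y⟩, φ.lab_eq,
      fun B => ⟨φ.box_pres B, hbox B⟩⟩⟩
  · rintro ⟨φ⟩
    exact ⟨⟨φ.toEquiv, φ.toEquiv.bijective, φ.lab_eq, fun x y => (φ.le_iff x y).1,
      fun B => (φ.mem_boxes_iff B).1⟩, fun x y => (φ.le_iff x y).2,
      fun B => (φ.mem_boxes_iff B).2⟩

theorem PBEquiv.iso {P Q : PB A} (φ : P ≃pb Q) : Iso P Q := iso_iff_nonempty_pbEquiv.2 ⟨φ⟩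

theorem Iso.refl (P : PB A) : Iso P P := (PBEquiv.refl P).iso

theorem Iso.symm {P Q : PB A} (h : Iso P Q) : Iso Q P :=
  (iso_iff_nonempty_pbEquiv.1 h).some.symm.iso

theorem Iso.trans {P Q R : PB A} (h₁ : Iso P Q) (h₂ : Iso Q R) : Iso P R :=
  ((iso_iff_nonempty_pbEquiv.1 h₁).some.trans (iso_iff_nonempty_pbEquiv.1 h₂).some).iso

namespace PBEquiv

theorem image_boxes {P Q : PB A} (φ : P ≃pb Q) : image φ.toEquiv '' P.boxes = Q.boxes := by
  ext C
  rw [← φ.toEquiv.image_symm_image C, (image_injective.2 φ.toEquiv.injective).mem_set_image,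
    ← φ.mem_boxes_iff]

def seqCongr {P P' Q Q' : PB A} (φ : P ≃pb P') (ψ : Q ≃pb Q') :
    seqPB P Q ≃pb seqPB P' Q' where
  toEquiv := Equiv.sumCongr φ.toEquiv ψ.toEquiv
  le_iff x y := by
    cases x <;> cases y <;> first | exact φ.le_iff _ _ | exact ψ.le_iff _ _ | exact Iff.rfl
  lab_eq x := by cases x; exacts [φ.lab_eq _, ψ.lab_eq _]
  mem_boxes_iff := mem_boxes_iff_of_image_eq _ <| by
    rw [seqPB_boxes, seqPB_boxes, ← φ.image_boxes, ← ψ.image_boxes]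
    exact image_sumCongr_sumBoxes _ _ _ _

def parCongr {P P' Q Q' : PB A} (φ : P ≃pb P') (ψ : Q ≃pb Q') :
    parPB P Q ≃pb parPB P' Q' where
  toEquiv := Equiv.sumCongr φ.toEquiv ψ.toEquiv
  le_iff x y := by
    cases x <;> cases y <;> first | exact φ.le_iff _ _ | exact ψ.le_iff _ _ | exact Iff.rfl
  lab_eq x := by cases x; exacts [φ.lab_eq _, ψ.lab_eq _]
  mem_boxes_iff := mem_boxes_iff_of_image_eq _ <| by
    rw [parPB_boxes, parPB_boxes, ← φ.image_boxes, ← ψ.image_boxes]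
    exact image_sumCongr_sumBoxes _ _ _ _

def boxCongr {P Q : PB A} (φ : P ≃pb Q) : boxPB P ≃pb boxPB Q where
  toEquiv := φ.toEquiv
  le_iff := φ.le_iff
  lab_eq := φ.lab_eq
  mem_boxes_iff B :=
    (φ.mem_boxes_iff B).or (and_congr φ.toEquiv.image_eq_univ_iff.symm image_nonempty.symm)

def seqAssoc (P Q R : PB A) : seqPB (seqPB P Q) R ≃pb seqPB P (seqPB Q R) where
  toEquiv := Equiv.sumAssoc P.Ev Q.Ev R.Ev
  le_iff x y := by rcases x with (x | x) | x <;> rcases y with (y | y) | y <;> exact Iff.rfl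
  lab_eq x := by rcases x with (x | x) | x <;> rfl
  mem_boxes_iff := mem_boxes_iff_of_image_eq _ (image_sumAssoc_sumBoxes _ _ _)

def parAssoc (P Q R : PB A) : parPB (parPB P Q) R ≃pb parPB P (parPB Q R) where
  toEquiv := Equiv.sumAssoc P.Ev Q.Ev R.Ev
  le_iff x y := by rcases x with (x | x) | x <;> rcases y with (y | y) | y <;> exact Iff.rfl
  lab_eq x := by rcases x with (x | x) | x <;> rfl
  mem_boxes_iff := mem_boxes_iff_of_image_eq _ (image_sumAssoc_sumBoxes _ _ _)

def parComm (P Q : PB A) : parPB P Q ≃pb parPB Q P where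
  toEquiv := Equiv.sumComm P.Ev Q.Ev
  le_iff x y := by cases x <;> cases y <;> exact Iff.rfl
  lab_eq x := by cases x <;> rfl
  mem_boxes_iff := mem_boxes_iff_of_image_eq _ (image_sumComm_sumBoxes _ _)

def seqEmptyLeft (Z P : PB A) [IsEmpty Z.Ev] : seqPB Z P ≃pb P where
  toEquiv := Equiv.emptySum Z.Ev P.Ev
  le_iff x y := by
    rcases x with x | x <;> rcases y with y | y <;>
      first | exact isEmptyElim x | exact isEmptyElim y | exact Iff.rfl
  lab_eq x := by rcases x with x | x; exacts [isEmptyElim x, rfl]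
  mem_boxes_iff := mem_boxes_iff_of_image_eq _ <| by
    rw [seqPB_boxes, Z.boxes_eq_empty_of_isEmpty]
    exact image_emptySum_sumBoxes _

def seqEmptyRight (P Z : PB A) [IsEmpty Z.Ev] : seqPB P Z ≃pb P where
  toEquiv := Equiv.sumEmpty P.Ev Z.Ev
  le_iff x y := by
    rcases x with x | x <;> rcases y with y | y <;>
      first | exact isEmptyElim x | exact isEmptyElim y | exact Iff.rfl
  lab_eq x := by rcases x with x | x; exacts [rfl, isEmptyElim x]
  mem_boxes_iff := mem_boxes_iff_of_image_eq _ <| by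
    rw [seqPB_boxes, Z.boxes_eq_empty_of_isEmpty]
    exact image_sumEmpty_sumBoxes _

def parEmptyLeft (Z P : PB A) [IsEmpty Z.Ev] : parPB Z P ≃pb P where
  toEquiv := Equiv.emptySum Z.Ev P.Ev
  le_iff x y := by
    rcases x with x | x <;> rcases y with y | y <;>
      first | exact isEmptyElim x | exact isEmptyElim y | exact Iff.rfl
  lab_eq x := by rcases x with x | x; exacts [isEmptyElim x, rfl]
  mem_boxes_iff := mem_boxes_iff_of_image_eq _ <| by
    rw [parPB_boxes, Z.boxes_eq_empty_of_isEmpty]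
    exact image_emptySum_sumBoxes _

def boxBox (P : PB A) : boxPB (boxPB P) ≃pb boxPB P where
  toEquiv := Equiv.refl _
  le_iff _ _ := Iff.rfl
  lab_eq _ := rfl
  mem_boxes_iff B := by
    erw [Equiv.coe_refl, image_id]
    exact or_assoc.trans (or_congr_right or_self_iff)

def boxEmpty (Z : PB A) [IsEmpty Z.Ev] : boxPB Z ≃pb Z where
  toEquiv := Equiv.refl _
  le_iff _ _ := Iff.rfl
  lab_eq _ := rfl
  mem_boxes_iff B := by
    erw [Equiv.coe_refl, image_id]
    exact or_iff_left fun ⟨_, x, _⟩ => IsEmpty.false (α := Z.Ev) x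

def parLeftComm (P Q R : PB A) : parPB P (parPB Q R) ≃pb parPB Q (parPB P R) :=
  (parAssoc P Q R).symm.trans (((parComm P Q).parCongr (refl R)).trans (parAssoc Q P R))

end PBEquiv

/-! ### Isomorphism classes and soundness -/

theorem Iso.seqPB {P P' Q Q' : PB A} (h₁ : Iso P P') (h₂ : Iso Q Q') :
    Iso (seqPB P Q) (seqPB P' Q') :=
  let ⟨φ⟩ := iso_iff_nonempty_pbEquiv.1 h₁
  let ⟨ψ⟩ := iso_iff_nonempty_pbEquiv.1 h₂
  (φ.seqCongr ψ).iso

theorem Iso.parPB {P P' Q Q' : PB A} (h₁ : Iso P P') (h₂ : Iso Q Q') :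
    Iso (parPB P Q) (parPB P' Q') :=
  let ⟨φ⟩ := iso_iff_nonempty_pbEquiv.1 h₁
  let ⟨ψ⟩ := iso_iff_nonempty_pbEquiv.1 h₂
  (φ.parCongr ψ).iso

theorem Iso.boxPB {P Q : PB A} (h : Iso P Q) : Iso (boxPB P) (boxPB Q) :=
  let ⟨φ⟩ := iso_iff_nonempty_pbEquiv.1 h
  φ.boxCongr.iso

instance PB.isoSetoid (A : Type) : Setoid (PB A) := ⟨Iso, ⟨Iso.refl, Iso.symm, Iso.trans⟩⟩

instance : IsEmpty (onePB A).Ev := inferInstanceAs (IsEmpty PEmpty)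

abbrev IsoClass (A : Type) : Type 1 := Quotient (PB.isoSetoid A)

namespace IsoClass

def one : IsoClass A := ⟦onePB A⟧

def seq : IsoClass A → IsoClass A → IsoClass A :=
  Quotient.map₂ seqPB fun _ _ h₁ _ _ h₂ => h₁.seqPB h₂

def par : IsoClass A → IsoClass A → IsoClass A :=
  Quotient.map₂ parPB fun _ _ h₁ _ _ h₂ => h₁.parPB h₂

def box : IsoClass A → IsoClass A :=
  Quotient.map boxPB fun _ _ h => h.boxPB

theorem seq_assoc (a b c : IsoClass A) : seq (seq a b) c = seq a (seq b c) :=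
  Quotient.inductionOn₃ a b c fun P Q R => Quotient.sound (PBEquiv.seqAssoc P Q R).iso

theorem par_assoc (a b c : IsoClass A) : par (par a b) c = par a (par b c) :=
  Quotient.inductionOn₃ a b c fun P Q R => Quotient.sound (PBEquiv.parAssoc P Q R).iso

theorem par_comm (a b : IsoClass A) : par a b = par b a :=
  Quotient.inductionOn₂ a b fun P Q => Quotient.sound (PBEquiv.parComm P Q).iso

theorem one_seq (a : IsoClass A) : seq one a = a :=
  Quotient.inductionOn a fun P => Quotient.sound (PBEquiv.seqEmptyLeft _ P).iso

theorem seq_one (a : IsoClass A) : seq a one = a :=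
  Quotient.inductionOn a fun P => Quotient.sound (PBEquiv.seqEmptyRight P _).iso

theorem one_par (a : IsoClass A) : par one a = a :=
  Quotient.inductionOn a fun P => Quotient.sound (PBEquiv.parEmptyLeft _ P).iso

theorem box_box (a : IsoClass A) : box (box a) = box a :=
  Quotient.inductionOn a fun P => Quotient.sound (PBEquiv.boxBox P).iso

theorem box_one : box (one : IsoClass A) = one :=
  Quotient.sound (PBEquiv.boxEmpty _).iso

end IsoClass

def Term.isoClass (s : Term A) : IsoClass A := ⟦semT s⟧

theorem BimEq.isoClass_eq {s t : Term A} (h : BimEq s t) : s.isoClass = t.isoClass := by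
  induction h with
  | seq_assoc s t u => exact (IsoClass.seq_assoc s.isoClass t.isoClass u.isoClass).symm
  | par_assoc s t u => exact (IsoClass.par_assoc s.isoClass t.isoClass u.isoClass).symm
  | par_comm s t => exact IsoClass.par_comm s.isoClass t.isoClass
  | seq_unit_l s => exact IsoClass.one_seq s.isoClass
  | seq_unit_r s => exact IsoClass.seq_one s.isoClass
  | par_unit s => exact IsoClass.one_par s.isoClass
  | box_box s => exact IsoClass.box_box s.isoClass
  | box_one => exact IsoClass.box_one
  | refl => rfl
  | symm _ ih => exact ih.symm
  | trans _ _ ih₁ ih₂ => exact ih₁.trans ih₂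
  | seq_congr _ _ ih₁ ih₂ => exact congrArg₂ IsoClass.seq ih₁ ih₂
  | par_congr _ _ ih₁ ih₂ => exact congrArg₂ IsoClass.par ih₁ ih₂
  | box_congr _ ih => exact congrArg IsoClass.box ih

def Term2.isoClasses (e : Term2 A) : Set (IsoClass A) := (⟦·⟧) '' semT2 e

namespace Term2

theorem isoClasses_zero : (zero : Term2 A).isoClasses = ∅ := image_empty _

theorem isoClasses_one : (one : Term2 A).isoClasses = {IsoClass.one} := image_singleton

theorem isoClasses_seq (e f : Term2 A) :
    (seq e f).isoClasses = image2 IsoClass.seq e.isoClasses f.isoClasses :=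
  image_image2_distrib fun _ _ => rfl

theorem isoClasses_par (e f : Term2 A) :
    (par e f).isoClasses = image2 IsoClass.par e.isoClasses f.isoClasses :=
  image_image2_distrib fun _ _ => rfl

theorem isoClasses_plus (e f : Term2 A) :
    (plus e f).isoClasses = e.isoClasses ∪ f.isoClasses := image_union _ _ _

theorem isoClasses_box (e : Term2 A) : (box e).isoClasses = IsoClass.box '' e.isoClasses :=
  (image_image _ _ _).trans (image_image IsoClass.box (⟦·⟧) (semT2 e)).symm

end Term2

open Term2 in
theorem BSEq.isoClasses_eq {e f : Term2 A} (h : BSEq e f) : e.isoClasses = f.isoClasses := by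
  induction h with
  | seq_assoc =>
    simp only [isoClasses_seq]; exact (image2_assoc IsoClass.seq_assoc).symm
  | par_assoc =>
    simp only [isoClasses_par]; exact (image2_assoc IsoClass.par_assoc).symm
  | par_comm => simp only [isoClasses_par]; exact image2_comm IsoClass.par_comm
  | seq_unit_l =>
    rw [isoClasses_seq, isoClasses_one]; exact image2_left_identity IsoClass.one_seq _
  | seq_unit_r =>
    rw [isoClasses_seq, isoClasses_one]; exact image2_right_identity IsoClass.seq_one _
  | par_unit =>
    rw [isoClasses_par, isoClasses_one]; exact image2_left_identity IsoClass.one_par _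
  | box_box => simp only [isoClasses_box, image_image, IsoClass.box_box]
  | box_one => rw [isoClasses_box, isoClasses_one, image_singleton, IsoClass.box_one]
  | plus_assoc => simp only [isoClasses_plus, union_assoc]
  | plus_comm => simp only [isoClasses_plus, union_comm]
  | plus_idem => simp only [isoClasses_plus, union_self]
  | plus_unit => simp only [isoClasses_plus, isoClasses_zero, empty_union]
  | seq_zero_l => simp only [isoClasses_seq, isoClasses_zero, image2_empty_left]
  | seq_zero_r => simp only [isoClasses_seq, isoClasses_zero, image2_empty_right]
  | par_zero => simp only [isoClasses_par, isoClasses_zero, image2_empty_left]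
  | seq_distr_l => simp only [isoClasses_seq, isoClasses_plus, image2_union_right]
  | seq_distr_r => simp only [isoClasses_seq, isoClasses_plus, image2_union_left]
  | par_distr => simp only [isoClasses_par, isoClasses_plus, image2_union_right]
  | box_zero => simp only [isoClasses_box, isoClasses_zero, image_empty]
  | box_plus => simp only [isoClasses_box, isoClasses_plus, image_union]
  | refl => rfl
  | symm _ ih => exact ih.symm
  | trans _ _ ih₁ ih₂ => exact ih₁.trans ih₂
  | seq_congr _ _ ih₁ ih₂ => simp only [isoClasses_seq, ih₁, ih₂]
  | par_congr _ _ ih₁ ih₂ => simp only [isoClasses_par, ih₁, ih₂]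
  | plus_congr _ _ ih₁ ih₂ => simp only [isoClasses_plus, ih₁, ih₂]
  | box_congr _ ih => simp only [isoClasses_box, ih]

theorem image_mk_subset_image_mk_iff {X Y : Set (PB A)} :
    (⟦·⟧ : PB A → IsoClass A) '' X ⊆ (⟦·⟧) '' Y ↔
      ∀ P ∈ X, ∃ Q ∈ Y, Iso P Q := by
  constructor
  · intro h P hP
    obtain ⟨Q, hQ, hQP⟩ := h (mem_image_of_mem _ hP)
    exact ⟨Q, hQ, (Quotient.exact hQP).symm⟩
  · rintro h _ ⟨P, hP, rfl⟩
    obtain ⟨Q, hQ, hPQ⟩ := h P hP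
    exact ⟨Q, hQ, Quotient.sound hPQ.symm⟩

/-! ### Sums of series–parallel terms -/

namespace Term2

def summands : Term2 A → List (Term A)
  | zero => []
  | one => [.one]
  | atom a => [.atom a]
  | seq e f => e.summands.flatMap fun s => f.summands.map (.seq s)
  | par e f => e.summands.flatMap fun s => f.summands.map (.par s)
  | plus e f => e.summands ++ f.summands
  | box e => e.summands.map .box

theorem semT2_eq_image_summands (e : Term2 A) : semT2 e = semT '' {s | s ∈ e.summands} := by
  ext P
  induction e generalizing P with
  | zero => simp [semT2, summands]
  | one => simp [semT2, summands, semT]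
  | atom => simp [semT2, summands, semT]
  | seq e f ihe ihf => simp [semT2, summands, ihe, ihf, semT]
  | par e f ihe ihf => simp [semT2, summands, ihe, ihf, semT]
  | plus e f ihe ihf => simp [semT2, summands, ihe, ihf, or_and_right, exists_or]
  | box e ihe => simp [semT2, summands, ihe, semT]

theorem isoClasses_eq_image_summands (e : Term2 A) :
    e.isoClasses = Term.isoClass '' {s | s ∈ e.summands} := by
  rw [isoClasses, semT2_eq_image_summands, image_image]
  rfl

def sum (l : List (Term2 A)) : Term2 A := l.foldr plus zero

end Term2

theorem BimEq.toTerm2 {s t : Term A} (h : BimEq s t) : BSEq s.toTerm2 t.toTerm2 := by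
  induction h with
  | seq_assoc => exact .seq_assoc _ _ _
  | par_assoc => exact .par_assoc _ _ _
  | par_comm => exact .par_comm _ _
  | seq_unit_l => exact .seq_unit_l _
  | seq_unit_r => exact .seq_unit_r _
  | par_unit => exact .par_unit _
  | box_box => exact .box_box _
  | box_one => exact .box_one
  | refl => exact .refl _
  | symm _ ih => exact ih.symm
  | trans _ _ ih₁ ih₂ => exact ih₁.trans ih₂
  | seq_congr _ _ ih₁ ih₂ => exact ih₁.seq_congr ih₂
  | par_congr _ _ ih₁ ih₂ => exact ih₁.par_congr ih₂
  | box_congr _ ih => exact ih.box_congr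

namespace BSEq

open Term2

theorem sum_append (l m : List (Term2 A)) : BSEq (sum (l ++ m)) (plus (sum l) (sum m)) := by
  induction l with
  | nil => exact (plus_unit _).symm
  | cons x l ih => exact ((refl x).plus_congr ih).trans (plus_assoc _ _ _)

theorem op_sum_sum {op : Term2 A → Term2 A → Term2 A}
    (zero_left : ∀ b, BSEq (op zero b) zero) (zero_right : ∀ a, BSEq (op a zero) zero)
    (distr_left : ∀ a b c, BSEq (op a (plus b c)) (plus (op a b) (op a c)))
    (distr_right : ∀ a b c, BSEq (op (plus a b) c) (plus (op a c) (op b c)))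
    (l m : List (Term2 A)) :
    BSEq (op (sum l) (sum m)) (sum (l.flatMap fun x => m.map (op x))) := by
  have op_sum : ∀ x, BSEq (op x (sum m)) (sum (m.map (op x))) := fun x => by
    induction m with
    | nil => exact zero_right x
    | cons y m ih => exact (distr_left x y _).trans ((refl _).plus_congr ih)
  induction l with
  | nil => exact zero_left _
  | cons x l ih =>
    exact (distr_right x _ _).trans (((op_sum x).plus_congr ih).trans (sum_append _ _).symm)

theorem seq_sum_sum (l m : List (Term2 A)) :
    BSEq (seq (sum l) (sum m)) (sum (l.flatMap fun x => m.map (seq x))) :=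
  op_sum_sum seq_zero_l seq_zero_r seq_distr_l seq_distr_r l m

theorem par_sum_sum (l m : List (Term2 A)) :
    BSEq (par (sum l) (sum m)) (sum (l.flatMap fun x => m.map (par x))) :=
  op_sum_sum par_zero (fun a => (par_comm a zero).trans (par_zero a)) par_distr
    (fun a b c => (par_comm _ c).trans ((par_distr c a b).trans
      ((par_comm c a).plus_congr (par_comm c b)))) l m

theorem box_sum (l : List (Term2 A)) : BSEq (box (sum l)) (sum (l.map box)) := by
  induction l with
  | nil => exact box_zero
  | cons x l ih => exact (box_plus x _).trans ((refl _).plus_congr ih)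

theorem self_sum_summands (e : Term2 A) : BSEq e (sum (e.summands.map Term.toTerm2)) := by
  induction e with
  | zero => exact refl _
  | one | atom => exact ((plus_comm _ _).trans (plus_unit _)).symm
  | seq e f ihe ihf =>
    refine (ihe.seq_congr ihf).trans ?_
    simpa [summands, List.map_flatMap, List.flatMap_map, Function.comp_def, Term.toTerm2]
      using seq_sum_sum (e.summands.map Term.toTerm2) (f.summands.map Term.toTerm2)
  | par e f ihe ihf =>
    refine (ihe.par_congr ihf).trans ?_
    simpa [summands, List.map_flatMap, List.flatMap_map, Function.comp_def, Term.toTerm2]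
      using par_sum_sum (e.summands.map Term.toTerm2) (f.summands.map Term.toTerm2)
  | plus e f ihe ihf =>
    simpa [summands] using (ihe.plus_congr ihf).trans (sum_append _ _).symm
  | box e ihe =>
    simpa [summands, Function.comp_def, Term.toTerm2] using ihe.box_congr.trans (box_sum _)

theorem plus_sum_of_exists {x : Term2 A} {m : List (Term2 A)} (h : ∃ y ∈ m, BSEq x y) :
    BSEq (plus x (sum m)) (sum m) := by
  induction m with
  | nil => simp at h
  | cons y m ih =>
    obtain ⟨y', hy', hxy⟩ := h
    refine (plus_assoc _ _ _).trans ?_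
    rcases List.mem_cons.1 hy' with rfl | hy'
    · exact ((hxy.plus_congr (refl _)).trans (plus_idem _)).plus_congr (refl _)
    · exact ((plus_comm x y).plus_congr (refl _)).trans
        ((plus_assoc _ _ _).symm.trans ((refl y).plus_congr (ih ⟨y', hy', hxy⟩)))

theorem plus_sum_sum_of_forall {l m : List (Term2 A)} (h : ∀ x ∈ l, ∃ y ∈ m, BSEq x y) :
    BSEq (plus (sum l) (sum m)) (sum m) := by
  induction l with
  | nil => exact plus_unit _
  | cons x l ih =>
    exact (plus_assoc _ _ _).symm.trans (((refl x).plus_congr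
      (ih fun x hx => h x (List.mem_cons_of_mem _ hx))).trans
      (plus_sum_of_exists (h x List.mem_cons_self)))

theorem sum_of_forall_exists {l m : List (Term2 A)} (h₁ : ∀ x ∈ l, ∃ y ∈ m, BSEq x y)
    (h₂ : ∀ y ∈ m, ∃ x ∈ l, BSEq y x) : BSEq (sum l) (sum m) :=
  (plus_sum_sum_of_forall h₂).symm.trans ((plus_comm _ _).trans (plus_sum_sum_of_forall h₁))

end BSEq

/-! ### Normal forms of series–parallel terms -/

namespace Term

def seqList : List (Term A) → Term A
  | [] => one
  | f :: l => seq f (seqList l)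

def parList : List (Term A) → Term A
  | [] => one
  | f :: l => par f (parList l)

def size : Term A → ℕ
  | one => 0
  | atom _ => 1
  | seq s t => s.size + t.size + 1
  | par s t => s.size + t.size + 1
  | box s => s.size + 1

theorem size_seqList (l : List (Term A)) : (seqList l).size = (l.map size).sum + l.length := by
  induction l with
  | nil => rfl
  | cons f l ih =>
    simp only [seqList, size, ih, List.map_cons, List.sum_cons, List.length_cons]
    omega

theorem size_parList (l : List (Term A)) : (parList l).size = (l.map size).sum + l.length := by
  induction l with
  | nil => rfl
  | cons f l ih =>
    simp only [parList, size, ih, List.map_cons, List.sum_cons, List.length_cons]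
    omega

/-- Normal forms: `NF true` are the sequentially prime ones (factors of a `seqList`), `NF false`
the parallel prime ones (factors of a `parList`). -/
inductive NF : Bool → Term A → Prop
  | atom (b : Bool) (a : A) : NF b (atom a)
  | box (b : Bool) (l : List (Term A)) (hne : l ≠ []) (h : ∀ f ∈ l, NF true f)
      (hnb : ∀ w, l ≠ [box w]) : NF b (box (seqList l))
  | par (l : List (Term A)) (hlen : 2 ≤ l.length) (h : ∀ f ∈ l, NF false f) :
      NF true (parList l)
  | seq (l : List (Term A)) (hlen : 2 ≤ l.length) (h : ∀ f ∈ l, NF true f) :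
      NF false (seqList l)

theorem NF.one_le_size {b : Bool} {f : Term A} (h : NF b f) : 1 ≤ f.size := by
  cases h with
  | atom | box => simp [size]
  | par l hlen => rw [size_parList]; omega
  | seq l hlen => rw [size_seqList]; omega

end Term

open Term

namespace BimEq

theorem seqList_singleton (f : Term A) : BimEq (seqList [f]) f := seq_unit_r f

theorem parList_singleton (f : Term A) : BimEq (parList [f]) f :=
  (par_comm f .one).trans (par_unit f)

theorem seqList_append (l m : List (Term A)) :
    BimEq (seqList (l ++ m)) (.seq (seqList l) (seqList m)) := by
  induction l with
  | nil => exact (seq_unit_l _).symm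
  | cons f l ih => exact ((refl f).seq_congr ih).trans (seq_assoc _ _ _)

theorem parList_append (l m : List (Term A)) :
    BimEq (parList (l ++ m)) (.par (parList l) (parList m)) := by
  induction l with
  | nil => exact (par_unit _).symm
  | cons f l ih => exact ((refl f).par_congr ih).trans (par_assoc _ _ _)

theorem parList_perm {l m : List (Term A)} (h : l.Perm m) : BimEq (parList l) (parList m) := by
  induction h with
  | nil => exact refl _
  | cons x _ ih => exact (refl x).par_congr ih
  | swap x y l =>
    exact (par_assoc _ _ _).trans (((par_comm y x).par_congr (refl _)).trans (par_assoc _ _ _).symm)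
  | trans _ _ ih₁ ih₂ => exact ih₁.trans ih₂

end BimEq

theorem exists_parList_of_seqList {s : Term A} {l : List (Term A)} (hl : ∀ f ∈ l, NF true f)
    (hs : BimEq s (seqList l)) : ∃ m, (∀ f ∈ m, NF false f) ∧ BimEq s (parList m) := by
  match l, hl with
  | [], _ => exact ⟨[], by simp, hs⟩
  | [f], hl =>
    have hsf : BimEq s f := hs.trans (BimEq.seqList_singleton f)
    cases hl f (List.mem_singleton_self f) with
    | atom _ a =>
      exact ⟨[.atom a], by simpa using NF.atom false a,
        hsf.trans (BimEq.parList_singleton _).symm⟩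
    | box _ l' hne h hnb =>
      exact ⟨[.box (seqList l')], by simpa using NF.box false l' hne h hnb,
        hsf.trans (BimEq.parList_singleton _).symm⟩
    | par m _ h => exact ⟨m, h, hsf⟩
  | f :: g :: l, hl =>
    exact ⟨[seqList (f :: g :: l)], by simpa using NF.seq (f :: g :: l) (by simp) hl,
      hs.trans (BimEq.parList_singleton _).symm⟩

theorem exists_seqList_of_parList {s : Term A} {l : List (Term A)} (hl : ∀ f ∈ l, NF false f)
    (hs : BimEq s (parList l)) : ∃ m, (∀ f ∈ m, NF true f) ∧ BimEq s (seqList m) := by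
  match l, hl with
  | [], _ => exact ⟨[], by simp, hs⟩
  | [f], hl =>
    have hsf : BimEq s f := hs.trans (BimEq.parList_singleton f)
    cases hl f (List.mem_singleton_self f) with
    | atom _ a =>
      exact ⟨[.atom a], by simpa using NF.atom true a,
        hsf.trans (BimEq.seqList_singleton _).symm⟩
    | box _ l' hne h hnb =>
      exact ⟨[.box (seqList l')], by simpa using NF.box true l' hne h hnb,
        hsf.trans (BimEq.seqList_singleton _).symm⟩
    | seq m _ h => exact ⟨m, h, hsf⟩
  | f :: g :: l, hl =>
    exact ⟨[parList (f :: g :: l)], by simpa using NF.par (f :: g :: l) (by simp) hl,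
      hs.trans (BimEq.seqList_singleton _).symm⟩

theorem exists_seqList_box {u : Term A} {l : List (Term A)} (hl : ∀ f ∈ l, NF true f)
    (hu : BimEq u (seqList l)) :
    ∃ m, (∀ f ∈ m, NF true f) ∧ BimEq (.box u) (seqList m) := by
  by_cases hne : l = []
  · subst hne
    exact ⟨[], by simp, hu.box_congr.trans .box_one⟩
  by_cases hnb : ∃ w, l = [.box w]
  · obtain ⟨w, rfl⟩ := hnb
    exact ⟨[.box w], hl, (hu.trans (BimEq.seqList_singleton _)).box_congr.trans
      ((BimEq.box_box w).trans (BimEq.seqList_singleton _).symm)⟩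
  · push Not at hnb
    exact ⟨[.box (seqList l)], by simpa using NF.box true l hne hl hnb,
      hu.box_congr.trans (BimEq.seqList_singleton _).symm⟩

theorem Term.exists_nf_factors (s : Term A) :
    (∃ l, (∀ f ∈ l, NF true f) ∧ BimEq s (seqList l)) ∧
      ∃ l, (∀ f ∈ l, NF false f) ∧ BimEq s (parList l) := by
  induction s with
  | one => exact ⟨⟨[], by simp, .refl _⟩, [], by simp, .refl _⟩
  | atom a =>
    exact ⟨⟨[.atom a], by simpa using NF.atom true a, (BimEq.seqList_singleton _).symm⟩,
      [.atom a], by simpa using NF.atom false a, (BimEq.parList_singleton _).symm⟩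
  | seq u v ihu ihv =>
    obtain ⟨⟨lu, hlu, hu⟩, -⟩ := ihu
    obtain ⟨⟨lv, hlv, hv⟩, -⟩ := ihv
    have h : ∀ f ∈ lu ++ lv, NF true f := fun f hf =>
      (List.mem_append.1 hf).elim (hlu f) (hlv f)
    have hseq := (hu.seq_congr hv).trans (BimEq.seqList_append lu lv).symm
    exact ⟨⟨_, h, hseq⟩, exists_parList_of_seqList h hseq⟩
  | par u v ihu ihv =>
    obtain ⟨-, lu, hlu, hu⟩ := ihu
    obtain ⟨-, lv, hlv, hv⟩ := ihv
    have h : ∀ f ∈ lu ++ lv, NF false f := fun f hf =>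
      (List.mem_append.1 hf).elim (hlu f) (hlv f)
    have hpar := (hu.par_congr hv).trans (BimEq.parList_append lu lv).symm
    exact ⟨exists_seqList_of_parList h hpar, _, h, hpar⟩
  | box u ihu =>
    obtain ⟨⟨l, hl, hu⟩, -⟩ := ihu
    obtain ⟨m, hm, hbox⟩ := exists_seqList_box hl hu
    exact ⟨⟨m, hm, hbox⟩, exists_parList_of_seqList hm hbox⟩

/-! ### Indecomposability and top-level boxes -/

def SeqIndecomposable (P : PB A) : Prop :=
  ∀ S, IsPrefix P S → Nested P S → S = ∅ ∨ S = univ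

def ParIndecomposable (P : PB A) : Prop :=
  ∀ S, Isolated P S → Nested P S → S = ∅ ∨ S = univ

def BoxedTop (P : PB A) : Prop := univ ∈ P.boxes

theorem eq_empty_or_univ_of_isLeft_eq {α β : Type} (hα : Nonempty α) (hβ : Nonempty β)
    {S : Set (α ⊕ β)} (h : ∀ z ∈ S, ∀ w ∉ S, z.isLeft = w.isLeft) :
    S = ∅ ∨ S = univ := by
  rcases S.eq_empty_or_nonempty with hS | ⟨z, hz⟩
  · exact .inl hS
  refine .inr (eq_univ_of_forall fun w => by_contra fun hw => ?_)
  have other_side : ∀ u : α ⊕ β, u.isLeft ≠ z.isLeft → False := fun u hu => by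
    by_cases hu' : u ∈ S
    · exact hu ((h u hu' w hw).trans (h z hz w hw).symm)
    · exact hu (h z hz u hu').symm
  cases z
  · exact other_side (.inr hβ.some) (by simp)
  · exact other_side (.inl hα.some) (by simp)

theorem seqIndecomposable_parPB {P Q : PB A} (hP : Nonempty P.Ev) (hQ : Nonempty Q.Ev) :
    SeqIndecomposable (parPB P Q) := fun _ hS _ =>
  eq_empty_or_univ_of_isLeft_eq hP hQ fun z hz w hw => by
    cases z <;> cases w <;> first | rfl | exact (hS _ hz _ hw : False).elim

theorem parIndecomposable_seqPB {P Q : PB A} (hP : Nonempty P.Ev) (hQ : Nonempty Q.Ev) :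
    ParIndecomposable (seqPB P Q) := fun _ hS _ =>
  eq_empty_or_univ_of_isLeft_eq hP hQ fun z hz w hw => by
    cases z <;> cases w <;>
      first | rfl | exact ((hS _ hz _ hw).1 trivial).elim | exact ((hS _ hz _ hw).2 trivial).elim

theorem eq_empty_or_univ_of_subsingleton {α : Type} (h : ∀ x y : α, x = y) (S : Set α) :
    S = ∅ ∨ S = univ := by
  rcases S.eq_empty_or_nonempty with hS | ⟨x, hx⟩
  · exact .inl hS
  · exact .inr (eq_univ_of_forall fun y => h x y ▸ hx)

theorem BoxedTop.eq_empty_or_univ {P : PB A} (h : BoxedTop P) {S : Set P.Ev} (hS : Nested P S) :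
    S = ∅ ∨ S = univ := by
  rcases hS univ h with hsub | hdisj
  · exact .inr (univ_subset_iff.1 hsub)
  · exact .inl ((univ_inter S).symm.trans hdisj)

theorem boxedTop_boxPB {P : PB A} (h : Nonempty P.Ev) : BoxedTop (boxPB P) :=
  .inr ⟨rfl, univ_nonempty⟩

theorem univ_notMem_sumBoxes {α β : Type} (hα : Nonempty α) (hβ : Nonempty β)
    (X : Set (Set α)) (Y : Set (Set β)) : univ ∉ sumBoxes X Y := by
  rintro (⟨C, -, hC⟩ | ⟨C, -, hC⟩)
  · have : (Sum.inr hβ.some : α ⊕ β) ∈ Sum.inl '' C := hC ▸ mem_univ _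
    simp at this
  · have : (Sum.inl hα.some : α ⊕ β) ∈ Sum.inr '' C := hC ▸ mem_univ _
    simp at this

theorem PBEquiv.boxedTop_iff {P Q : PB A} (φ : P ≃pb Q) : BoxedTop P ↔ BoxedTop Q := by
  rw [BoxedTop, φ.mem_boxes_iff, image_univ_of_surjective φ.toEquiv.surjective, BoxedTop]

def PBEquiv.ofBoxPB {P Q : PB A} (φ : boxPB P ≃pb boxPB Q) (hP : ¬BoxedTop P)
    (hQ : ¬BoxedTop Q) : P ≃pb Q where
  toEquiv := φ.toEquiv
  le_iff := φ.le_iff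
  lab_eq := φ.lab_eq
  mem_boxes_iff B := by
    let e : P.Ev ≃ Q.Ev := φ.toEquiv
    have key : B ∈ P.boxes ∨ B = univ ∧ B.Nonempty ↔
        e '' B ∈ Q.boxes ∨ e '' B = univ ∧ (e '' B).Nonempty := φ.mem_boxes_iff B
    rw [e.image_eq_univ_iff] at key
    constructor
    · intro hB
      exact (key.1 (.inl hB)).resolve_right fun ⟨hu, _⟩ => hP (by rwa [hu] at hB)
    · intro hB
      refine (key.2 (.inl hB)).resolve_right fun ⟨hu, _⟩ => hQ ?_
      rwa [hu, image_univ_of_surjective e.surjective] at hB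

theorem nonempty_seqList_cons {f : Term A} (l : List (Term A)) (h : Nonempty (semT f).Ev) :
    Nonempty (semT (seqList (f :: l))).Ev := ⟨.inl h.some⟩

theorem nonempty_parList_cons {f : Term A} (l : List (Term A)) (h : Nonempty (semT f).Ev) :
    Nonempty (semT (parList (f :: l))).Ev := ⟨.inl h.some⟩

theorem not_boxedTop_atom (a : A) : ¬BoxedTop (semT (.atom a)) := notMem_empty _

theorem not_pbEquiv_atom_of_ne {a : A} {Q : PB A} {u v : Q.Ev} (huv : u ≠ v)
    (φ : semT (.atom a) ≃pb Q) : False :=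
  huv (φ.toEquiv.symm.injective rfl)

namespace Term.NF

variable {b : Bool} {l : List (Term A)}

theorem nonempty {f : Term A} (h : NF b f) : Nonempty (semT f).Ev := by
  induction h with
  | atom => exact ⟨PUnit.unit⟩
  | box _ l hne _ _ ih | seq l hlen _ ih =>
    obtain _ | ⟨g, l⟩ := l
    · simp at *
    · exact nonempty_seqList_cons l (ih g List.mem_cons_self)
  | par l hlen _ ih =>
    obtain _ | ⟨g, l⟩ := l
    · simp at hlen
    · exact nonempty_parList_cons l (ih g List.mem_cons_self)

theorem nonempty_seqList (hne : l ≠ []) (hl : ∀ f ∈ l, NF b f) :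
    Nonempty (semT (seqList l)).Ev := by
  obtain _ | ⟨f, l⟩ := l
  · contradiction
  · exact nonempty_seqList_cons l (hl f List.mem_cons_self).nonempty

theorem boxedTop_box (hne : l ≠ []) (hl : ∀ f ∈ l, NF true f) :
    BoxedTop (semT (.box (seqList l))) :=
  boxedTop_boxPB (nonempty_seqList hne hl)

theorem seqIndecomposable {f : Term A} (h : NF true f) : SeqIndecomposable (semT f) := by
  cases h with
  | atom => exact fun S _ _ => eq_empty_or_univ_of_subsingleton (fun _ _ => rfl) S
  | box _ l hne hl => exact fun S _ hS => (boxedTop_box hne hl).eq_empty_or_univ hS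
  | par l hlen hl =>
    obtain _ | ⟨c, _ | ⟨d, l⟩⟩ := l
    all_goals simp at hlen
    exact seqIndecomposable_parPB (hl c List.mem_cons_self).nonempty
      (nonempty_parList_cons l (hl d (by simp)).nonempty)

theorem parIndecomposable {f : Term A} (h : NF false f) : ParIndecomposable (semT f) := by
  cases h with
  | atom => exact fun S _ _ => eq_empty_or_univ_of_subsingleton (fun _ _ => rfl) S
  | box _ l hne hl => exact fun S _ hS => (boxedTop_box hne hl).eq_empty_or_univ hS
  | seq l hlen hl =>
    obtain _ | ⟨c, _ | ⟨d, l⟩⟩ := l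
    all_goals simp at hlen
    exact parIndecomposable_seqPB (hl c List.mem_cons_self).nonempty
      (nonempty_seqList_cons l (hl d (by simp)).nonempty)

theorem exists_ne_seqList (hlen : 2 ≤ l.length) (hl : ∀ f ∈ l, NF b f) :
    ∃ u v : (semT (seqList l)).Ev, u ≠ v := by
  obtain _ | ⟨c, _ | ⟨d, l⟩⟩ := l
  all_goals simp at hlen
  exact ⟨.inl (hl c (by simp)).nonempty.some, .inr (.inl (hl d (by simp)).nonempty.some),
    Sum.inl_ne_inr⟩

theorem exists_ne_parList (hlen : 2 ≤ l.length) (hl : ∀ f ∈ l, NF b f) :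
    ∃ u v : (semT (parList l)).Ev, u ≠ v := by
  obtain _ | ⟨c, _ | ⟨d, l⟩⟩ := l
  all_goals simp at hlen
  exact ⟨.inl (hl c (by simp)).nonempty.some, .inr (.inl (hl d (by simp)).nonempty.some),
    Sum.inl_ne_inr⟩

theorem not_boxedTop_seqList (hlen : 2 ≤ l.length) (hl : ∀ f ∈ l, NF b f) :
    ¬BoxedTop (semT (seqList l)) := by
  obtain _ | ⟨c, _ | ⟨d, l⟩⟩ := l
  all_goals simp at hlen
  exact univ_notMem_sumBoxes (hl c (by simp)).nonempty
    (nonempty_seqList_cons l (hl d (by simp)).nonempty) _ _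

theorem not_boxedTop_parList (hlen : 2 ≤ l.length) (hl : ∀ f ∈ l, NF b f) :
    ¬BoxedTop (semT (parList l)) := by
  obtain _ | ⟨c, _ | ⟨d, l⟩⟩ := l
  all_goals simp at hlen
  exact univ_notMem_sumBoxes (hl c (by simp)).nonempty
    (nonempty_parList_cons l (hl d (by simp)).nonempty) _ _

theorem not_boxedTop_seqList_of_box (hne : l ≠ []) (hl : ∀ f ∈ l, NF true f)
    (hnb : ∀ w, l ≠ [.box w]) : ¬BoxedTop (semT (seqList l)) := by
  match l, hne, hl, hnb with
  | [f], _, hl, hnb =>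
    intro hB
    have hBf := (PBEquiv.seqEmptyRight (semT f) (onePB A)).boxedTop_iff.1 hB
    cases hl f (List.mem_singleton_self f) with
    | atom => exact not_boxedTop_atom _ hBf
    | box => exact hnb _ rfl
    | par m hlen hm => exact not_boxedTop_parList hlen hm hBf
  | _ :: _ :: _, _, hl, _ => exact not_boxedTop_seqList (by simp) hl

end Term.NF

/-! ### Prefix, isolated and nested sets of compositions -/

namespace PBEquiv

variable {P Q : PB A}

theorem isPrefix_image (φ : P ≃pb Q) {S : Set P.Ev} (h : IsPrefix P S) :
    IsPrefix Q (φ.toEquiv '' S) := by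
  rintro _ ⟨x, hx, rfl⟩ z hz
  rw [← φ.toEquiv.apply_symm_apply z, ← φ.le_iff]
  exact h x hx _ fun h' => hz ⟨_, h', φ.toEquiv.apply_symm_apply z⟩

theorem isolated_image (φ : P ≃pb Q) {S : Set P.Ev} (h : Isolated P S) :
    Isolated Q (φ.toEquiv '' S) := by
  rintro _ ⟨x, hx, rfl⟩ z hz
  rw [← φ.toEquiv.apply_symm_apply z, ← φ.le_iff, ← φ.le_iff]
  exact h x hx _ fun h' => hz ⟨_, h', φ.toEquiv.apply_symm_apply z⟩

theorem nested_image (φ : P ≃pb Q) {S : Set P.Ev} (h : Nested P S) :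
    Nested Q (φ.toEquiv '' S) := by
  intro B hB
  obtain ⟨C, rfl⟩ : ∃ C, φ.toEquiv '' C = B := ⟨_, φ.toEquiv.image_symm_image B⟩
  rcases h C ((φ.mem_boxes_iff C).2 hB) with hsub | hdisj
  · exact .inl (image_mono hsub)
  · exact .inr (by rw [← image_inter φ.toEquiv.injective, hdisj, image_empty])

end PBEquiv

section Components

variable {P Q : PB A} {S : Set (P.Ev ⊕ Q.Ev)}

theorem nested_preimage_inl {α β : Type} {X : Set (Set α)} {Y : Set (Set β)}
    {S : Set (α ⊕ β)} (h : ∀ B ∈ sumBoxes X Y, B ⊆ S ∨ B ∩ S = ∅) :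
    ∀ C ∈ X, C ⊆ Sum.inl ⁻¹' S ∨ C ∩ Sum.inl ⁻¹' S = ∅ :=
  fun C hC => (h _ (.inl ⟨C, hC, rfl⟩)).imp image_subset_iff.1
    fun hdisj => image_eq_empty.1 ((image_inter_preimage _ _ _).trans hdisj)

theorem nested_preimage_inr {α β : Type} {X : Set (Set α)} {Y : Set (Set β)}
    {S : Set (α ⊕ β)} (h : ∀ B ∈ sumBoxes X Y, B ⊆ S ∨ B ∩ S = ∅) :
    ∀ C ∈ Y, C ⊆ Sum.inr ⁻¹' S ∨ C ∩ Sum.inr ⁻¹' S = ∅ :=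
  fun C hC => (h _ (.inr ⟨C, hC, rfl⟩)).imp image_subset_iff.1
    fun hdisj => image_eq_empty.1 ((image_inter_preimage _ _ _).trans hdisj)

theorem nested_range_inl {α β : Type} (X : Set (Set α)) (Y : Set (Set β)) :
    ∀ B ∈ sumBoxes X Y, B ⊆ range Sum.inl ∨ B ∩ range Sum.inl = ∅ := by
  rintro _ (⟨C, -, rfl⟩ | ⟨C, -, rfl⟩)
  · exact .inl (image_subset_range _ _)
  · exact .inr (eq_empty_of_forall_notMem fun _ ⟨⟨_, _, hc⟩, ⟨_, hx⟩⟩ =>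
      Sum.inl_ne_inr (hx.trans hc.symm))

theorem isPrefix_range_inl : IsPrefix (seqPB P Q) (range Sum.inl) := by
  rintro _ ⟨x, rfl⟩ (y | y) hy
  exacts [absurd ⟨y, rfl⟩ hy, trivial]

theorem isolated_range_inl : Isolated (parPB P Q) (range Sum.inl) := by
  rintro _ ⟨x, rfl⟩ (y | y) hy
  exacts [absurd ⟨y, rfl⟩ hy, ⟨id, id⟩]

theorem range_inl_subset_of_isPrefix (hP : Nonempty P.Ev) (hind : SeqIndecomposable P)
    (hS : S.Nonempty) (hpre : IsPrefix (seqPB P Q) S) (hnest : Nested (seqPB P Q) S) :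
    range Sum.inl ⊆ S := by
  rcases hind _ (fun x hx y hy => hpre (.inl x) hx (.inl y) hy) (nested_preimage_inl hnest)
    with h | h
  · obtain ⟨z | z, hz⟩ := hS
    · exact absurd hz (eq_empty_iff_forall_notMem.1 h _)
    · exact absurd (hpre _ hz (.inl hP.some) (eq_empty_iff_forall_notMem.1 h _)) id
  · rintro _ ⟨x, rfl⟩
    exact eq_univ_iff_forall.1 h x

theorem range_inl_subset_of_isolated (hind : ParIndecomposable P) (hS : (Sum.inl ⁻¹' S).Nonempty)
    (hiso : Isolated (parPB P Q) S) (hnest : Nested (parPB P Q) S) : range Sum.inl ⊆ S := by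
  rcases hind _ (fun x hx y hy => hiso (.inl x) hx (.inl y) hy) (nested_preimage_inl hnest)
    with h | h
  · exact absurd h hS.ne_empty
  · rintro _ ⟨x, rfl⟩
    exact eq_univ_iff_forall.1 h x

end Components

/-! ### Splitting isomorphisms of compositions -/

theorem image_inl_mem_sumBoxes_iff {α β : Type} {X : Set (Set α)} {Y : Set (Set β)}
    (hY : ∅ ∉ Y) {B : Set α} : Sum.inl '' B ∈ sumBoxes X Y ↔ B ∈ X := by
  refine ⟨?_, fun hB => .inl ⟨B, hB, rfl⟩⟩
  rintro (⟨C, hC, h⟩ | ⟨C, hC, h⟩)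
  · rwa [← image_injective.2 Sum.inl_injective h]
  · refine absurd ((eq_empty_of_forall_notMem fun c hc => ?_) ▸ hC) hY
    obtain ⟨b, -, hb⟩ := h ▸ mem_image_of_mem Sum.inr hc
    exact Sum.inl_ne_inr hb

theorem image_inr_mem_sumBoxes_iff {α β : Type} {X : Set (Set α)} {Y : Set (Set β)}
    (hX : ∅ ∉ X) {B : Set β} : Sum.inr '' B ∈ sumBoxes X Y ↔ B ∈ Y := by
  refine ⟨?_, fun hB => .inr ⟨B, hB, rfl⟩⟩
  rintro (⟨C, hC, h⟩ | ⟨C, hC, h⟩)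
  · refine absurd ((eq_empty_of_forall_notMem fun c hc => ?_) ▸ hC) hX
    obtain ⟨b, -, hb⟩ := h ▸ mem_image_of_mem Sum.inl hc
    exact Sum.inr_ne_inl hb
  · rwa [← image_injective.2 Sum.inr_injective h]

theorem image_val_image_equiv_image {α β : Type} (e : α ≃ β) {S : Set α} {T : Set β}
    (h : e '' S = T) (B : Set S) :
    Subtype.val '' ((e.image S).trans (Equiv.setCongr h) '' B) = e '' (Subtype.val '' B) := by
  simp only [image_image]
  rfl

theorem image_val_image_rangeInl_symm {α β : Type} (B : Set α) :
    Subtype.val '' ((Equiv.Set.rangeInl α β).symm '' B) = Sum.inl '' B := by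
  simp only [image_image, Equiv.Set.rangeInl_symm_apply_coe]

theorem image_val_image_rangeInr_symm {α β : Type} (B : Set β) :
    Subtype.val '' ((Equiv.Set.rangeInr α β).symm '' B) = Sum.inr '' B := by
  simp only [image_image, Equiv.Set.rangeInr_symm_apply_coe]

namespace PBEquiv

variable {P Q P' Q' : PB A}

def restrict (φ : P ≃pb Q) {S : Set P.Ev} {T : Set Q.Ev} (h : φ.toEquiv '' S = T) :
    restrictPB P S ≃pb restrictPB Q T where
  toEquiv := (φ.toEquiv.image S).trans (Equiv.setCongr h)
  le_iff x y := φ.le_iff x.1 y.1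
  lab_eq x := φ.lab_eq x.1
  mem_boxes_iff B := (φ.mem_boxes_iff (Subtype.val '' B)).trans
    (iff_of_eq (congrArg (· ∈ Q.boxes) (image_val_image_equiv_image φ.toEquiv h B).symm))

def seqRangeInl (P Q : PB A) : P ≃pb restrictPB (seqPB P Q) (range Sum.inl) where
  toEquiv := (Equiv.Set.rangeInl P.Ev Q.Ev).symm
  le_iff _ _ := Iff.rfl
  lab_eq _ := rfl
  mem_boxes_iff B := (image_inl_mem_sumBoxes_iff Q.empty_notMem_boxes).symm.trans
    (iff_of_eq (congrArg (· ∈ sumBoxes P.boxes Q.boxes) (image_val_image_rangeInl_symm B).symm))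

def seqRangeInr (P Q : PB A) : Q ≃pb restrictPB (seqPB P Q) (range Sum.inr) where
  toEquiv := (Equiv.Set.rangeInr P.Ev Q.Ev).symm
  le_iff _ _ := Iff.rfl
  lab_eq _ := rfl
  mem_boxes_iff B := (image_inr_mem_sumBoxes_iff P.empty_notMem_boxes).symm.trans
    (iff_of_eq (congrArg (· ∈ sumBoxes P.boxes Q.boxes) (image_val_image_rangeInr_symm B).symm))

def parRangeInl (P Q : PB A) : P ≃pb restrictPB (parPB P Q) (range Sum.inl) where
  toEquiv := (Equiv.Set.rangeInl P.Ev Q.Ev).symm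
  le_iff _ _ := Iff.rfl
  lab_eq _ := rfl
  mem_boxes_iff B := (image_inl_mem_sumBoxes_iff Q.empty_notMem_boxes).symm.trans
    (iff_of_eq (congrArg (· ∈ sumBoxes P.boxes Q.boxes) (image_val_image_rangeInl_symm B).symm))

def parRangeInr (P Q : PB A) : Q ≃pb restrictPB (parPB P Q) (range Sum.inr) where
  toEquiv := (Equiv.Set.rangeInr P.Ev Q.Ev).symm
  le_iff _ _ := Iff.rfl
  lab_eq _ := rfl
  mem_boxes_iff B := (image_inr_mem_sumBoxes_iff P.empty_notMem_boxes).symm.trans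
    (iff_of_eq (congrArg (· ∈ sumBoxes P.boxes Q.boxes) (image_val_image_rangeInr_symm B).symm))

theorem image_range_inr {α β α' β' : Type} (e : α ⊕ β ≃ α' ⊕ β')
    (h : e '' range Sum.inl = range Sum.inl) : e '' range Sum.inr = range Sum.inr := by
  rw [← compl_range_inl, e.image_compl, h]
  exact compl_range_inl

theorem seq_split (ψ : seqPB P Q ≃pb seqPB P' Q')
    (h : ψ.toEquiv '' range Sum.inl = range Sum.inl) :
    Nonempty (P ≃pb P') ∧ Nonempty (Q ≃pb Q') :=
  ⟨⟨(seqRangeInl P Q).trans ((ψ.restrict h).trans (seqRangeInl P' Q').symm)⟩,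
    ⟨(seqRangeInr P Q).trans
      ((ψ.restrict (image_range_inr ψ.toEquiv h)).trans (seqRangeInr P' Q').symm)⟩⟩

theorem par_split (ψ : parPB P Q ≃pb parPB P' Q')
    (h : ψ.toEquiv '' range Sum.inl = range Sum.inl) :
    Nonempty (P ≃pb P') ∧ Nonempty (Q ≃pb Q') :=
  ⟨⟨(parRangeInl P Q).trans ((ψ.restrict h).trans (parRangeInl P' Q').symm)⟩,
    ⟨(parRangeInr P Q).trans
      ((ψ.restrict (image_range_inr ψ.toEquiv h)).trans (parRangeInr P' Q').symm)⟩⟩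

theorem range_inl_subset_image_seq (hP' : Nonempty P'.Ev) (hind' : SeqIndecomposable P')
    (hP : Nonempty P.Ev) (ψ : seqPB P Q ≃pb seqPB P' Q') :
    range Sum.inl ⊆ ψ.toEquiv '' range Sum.inl :=
  range_inl_subset_of_isPrefix hP' hind' ((range_nonempty_iff_nonempty.2 hP).image _)
    (ψ.isPrefix_image isPrefix_range_inl) (ψ.nested_image (nested_range_inl _ _))

theorem image_range_inl_seq (hP : Nonempty P.Ev) (hind : SeqIndecomposable P)
    (hP' : Nonempty P'.Ev) (hind' : SeqIndecomposable P') (ψ : seqPB P Q ≃pb seqPB P' Q') :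
    ψ.toEquiv '' range Sum.inl = range Sum.inl := by
  refine subset_antisymm ?_ (range_inl_subset_image_seq hP' hind' hP ψ)
  exact (image_mono (range_inl_subset_image_seq hP hind hP' ψ.symm)).trans
    (ψ.toEquiv.image_symm_image _).subset

theorem image_range_inl_par (hind : ParIndecomposable P) (hP' : Nonempty P'.Ev)
    (ψ : parPB P Q ≃pb parPB P' Q') (h : range Sum.inl ⊆ ψ.toEquiv '' range Sum.inl) :
    ψ.toEquiv '' range Sum.inl = range Sum.inl := by
  set T := ψ.toEquiv.symm '' range Sum.inl
  have hT : T ⊆ range Sum.inl :=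
    (image_mono h).trans (ψ.toEquiv.symm_image_image _).subset
  have hTne : (Sum.inl ⁻¹' T).Nonempty := by
    obtain ⟨a, ha⟩ := hT (mem_image_of_mem _ (mem_range_self hP'.some))
    exact ⟨a, (congrArg (· ∈ T) ha).mpr (mem_image_of_mem _ (mem_range_self _))⟩
  have hTeq : T = range Sum.inl := subset_antisymm hT (range_inl_subset_of_isolated hind hTne
    (ψ.symm.isolated_image isolated_range_inl) (ψ.symm.nested_image (nested_range_inl _ _)))
  exact (congrArg (ψ.toEquiv '' ·) hTeq).symm.trans (ψ.toEquiv.image_symm_image _)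

end PBEquiv

/-! ### Peeling factors off normal forms -/

namespace Term.NF

theorem seqList_cons_peel {f g : Term A} {l m : List (Term A)} (hf : NF true f) (hg : NF true g)
    (φ : semT (seqList (f :: l)) ≃pb semT (seqList (g :: m))) :
    Nonempty (semT f ≃pb semT g) ∧ Nonempty (semT (seqList l) ≃pb semT (seqList m)) :=
  φ.seq_split (φ.image_range_inl_seq hf.nonempty hf.seqIndecomposable hg.nonempty
    hg.seqIndecomposable)

-- `S` contains a whole factor, which `θ` moves to the front.
theorem exists_parList_pbEquiv {ds : List (Term A)} (hds : ∀ d ∈ ds, NF false d)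
    {S : Set (semT (parList ds)).Ev} (hS : S.Nonempty) (hiso : Isolated _ S) (hnest : Nested _ S) :
    ∃ d₁ g d₂, ds = d₁ ++ g :: d₂ ∧
      ∃ θ : semT (parList ds) ≃pb parPB (semT g) (semT (parList (d₁ ++ d₂))),
        ∀ x, θ.toEquiv.symm (.inl x) ∈ S := by
  induction ds with
  | nil => exact PEmpty.elim hS.some
  | cons g rest ih =>
    by_cases hl : (Sum.inl ⁻¹' S).Nonempty
    · have hsub := range_inl_subset_of_isolated (hds g List.mem_cons_self).parIndecomposable
        hl hiso hnest
      exact ⟨[], g, rest, rfl, PBEquiv.refl _, fun x => hsub ⟨x, rfl⟩⟩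
    have hr : (Sum.inr ⁻¹' S).Nonempty := by
      obtain ⟨z | z, hz⟩ := hS
      exacts [absurd ⟨z, hz⟩ hl, ⟨z, hz⟩]
    obtain ⟨d₁, g', d₂, rfl, θ, hθ⟩ := ih (fun d hd => hds d (List.mem_cons_of_mem _ hd))
      hr (fun x hx y hy => hiso (.inr x) hx (.inr y) hy) (nested_preimage_inr hnest)
    exact ⟨g :: d₁, g', d₂, rfl,
      ((PBEquiv.refl _).parCongr θ).trans (PBEquiv.parLeftComm _ _ _), hθ⟩

theorem parList_cons_peel {c : Term A} {cs ds : List (Term A)} (hc : NF false c)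
    (hds : ∀ d ∈ ds, NF false d) (φ : semT (parList (c :: cs)) ≃pb semT (parList ds)) :
    ∃ d₁ g d₂, ds = d₁ ++ g :: d₂ ∧ Nonempty (semT c ≃pb semT g) ∧
      Nonempty (semT (parList cs) ≃pb semT (parList (d₁ ++ d₂))) := by
  obtain ⟨d₁, g, d₂, rfl, θ, hθ⟩ := exists_parList_pbEquiv hds
    ((range_nonempty_iff_nonempty.2 hc.nonempty).image φ.toEquiv)
    (φ.isolated_image isolated_range_inl) (φ.nested_image (nested_range_inl _ _))
  set ψ := φ.trans θ
  refine ⟨d₁, g, d₂, rfl, ψ.par_split (ψ.image_range_inl_par hc.parIndecomposable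
    (hds g (by simp)).nonempty ?_)⟩
  rintro _ ⟨x, rfl⟩
  obtain ⟨y, hy, hyx⟩ := hθ x
  exact ⟨y, hy, (congrArg θ.toEquiv hyx).trans (θ.toEquiv.apply_symm_apply _)⟩

end Term.NF

/-! ### Completeness -/

def SeqListsComplete (A : Type) (n : ℕ) : Prop :=
  ∀ l m : List (Term A), (∀ f ∈ l, NF true f) → (∀ f ∈ m, NF true f) →
    (l.map size).sum + (m.map size).sum < n →
    Nonempty (semT (seqList l) ≃pb semT (seqList m)) → BimEq (seqList l) (seqList m)

def ParListsComplete (A : Type) (n : ℕ) : Prop :=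
  ∀ l m : List (Term A), (∀ f ∈ l, NF false f) → (∀ f ∈ m, NF false f) →
    (l.map size).sum + (m.map size).sum < n →
    Nonempty (semT (parList l) ≃pb semT (parList m)) → BimEq (parList l) (parList m)

namespace Term.NF

theorem bimEq_of_pbEquiv {n : ℕ} (hs : SeqListsComplete A n) (hp : ParListsComplete A n)
    {b : Bool} {f g : Term A} (hf : NF b f) (hg : NF b g) (hsize : f.size + g.size ≤ n)
    (φ : semT f ≃pb semT g) : BimEq f g := by
  cases hf with
  | atom _ a =>
    cases hg with
    | atom _ a' =>
      obtain rfl : a' = a := φ.lab_eq PUnit.unit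
      exact .refl _
    | box _ m hne hm => exact absurd (φ.boxedTop_iff.2 (boxedTop_box hne hm)) (not_boxedTop_atom a)
    | par m hlen hm =>
      obtain ⟨u, v, huv⟩ := exists_ne_parList hlen hm
      exact (not_pbEquiv_atom_of_ne huv φ).elim
    | seq m hlen hm =>
      obtain ⟨u, v, huv⟩ := exists_ne_seqList hlen hm
      exact (not_pbEquiv_atom_of_ne huv φ).elim
  | box _ l hne hl hnb =>
    have hB := φ.boxedTop_iff.1 (boxedTop_box hne hl)
    cases hg with
    | box _ m hne' hm hnb' =>
      simp only [size, size_seqList] at hsize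
      exact (hs l m hl hm (by omega) ⟨φ.ofBoxPB (not_boxedTop_seqList_of_box hne hl hnb)
        (not_boxedTop_seqList_of_box hne' hm hnb')⟩).box_congr
    | atom _ a => exact absurd hB (not_boxedTop_atom a)
    | par m hlen hm => exact absurd hB (not_boxedTop_parList hlen hm)
    | seq m hlen hm => exact absurd hB (not_boxedTop_seqList hlen hm)
  | par l hlen hl =>
    cases hg with
    | par m hlen' hm =>
      simp only [size_parList] at hsize
      exact hp l m hl hm (by omega) ⟨φ⟩
    | atom =>
      obtain ⟨u, v, huv⟩ := exists_ne_parList hlen hl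
      exact (not_pbEquiv_atom_of_ne huv φ.symm).elim
    | box _ m hne hm =>
      exact absurd (φ.boxedTop_iff.2 (boxedTop_box hne hm)) (not_boxedTop_parList hlen hl)
  | seq l hlen hl =>
    cases hg with
    | seq m hlen' hm =>
      simp only [size_seqList] at hsize
      exact hs l m hl hm (by omega) ⟨φ⟩
    | atom =>
      obtain ⟨u, v, huv⟩ := exists_ne_seqList hlen hl
      exact (not_pbEquiv_atom_of_ne huv φ.symm).elim
    | box _ m hne hm =>
      exact absurd (φ.boxedTop_iff.2 (boxedTop_box hne hm)) (not_boxedTop_seqList hlen hl)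

end Term.NF

theorem seqListsComplete_succ {n : ℕ} (hs : SeqListsComplete A n) (hp : ParListsComplete A n) :
    SeqListsComplete A (n + 1) := by
  intro l m hl hm hsize ⟨φ⟩
  rcases l with _ | ⟨f, l⟩ <;> rcases m with _ | ⟨g, m⟩
  · exact .refl _
  · exact PEmpty.elim (φ.symm.toEquiv (.inl (hm g List.mem_cons_self).nonempty.some))
  · exact PEmpty.elim (φ.toEquiv (.inl (hl f List.mem_cons_self).nonempty.some))
  have hf := hl f List.mem_cons_self
  have hg := hm g List.mem_cons_self
  obtain ⟨⟨φ₁⟩, ⟨φ₂⟩⟩ := hf.seqList_cons_peel hg φ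
  simp only [List.map_cons, List.sum_cons] at hsize
  have := hf.one_le_size
  have := hg.one_le_size
  exact (hf.bimEq_of_pbEquiv hs hp hg (by omega) φ₁).seq_congr
    (hs l m (fun f hf => hl f (List.mem_cons_of_mem _ hf))
      (fun g hg => hm g (List.mem_cons_of_mem _ hg)) (by omega) ⟨φ₂⟩)

theorem parListsComplete_succ {n : ℕ} (hs : SeqListsComplete A n) (hp : ParListsComplete A n) :
    ParListsComplete A (n + 1) := by
  intro l m hl hm hsize ⟨φ⟩
  rcases l with _ | ⟨c, cs⟩
  · rcases m with _ | ⟨g, m⟩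
    · exact .refl _
    · exact PEmpty.elim (φ.symm.toEquiv (.inl (hm g List.mem_cons_self).nonempty.some))
  have hc := hl c List.mem_cons_self
  obtain ⟨d₁, g, d₂, rfl, ⟨φ₁⟩, ⟨φ₂⟩⟩ := hc.parList_cons_peel hm φ
  have hg := hm g (by simp)
  simp only [List.map_cons, List.map_append, List.sum_cons, List.sum_append] at hsize
  have := hc.one_le_size
  have := hg.one_le_size
  have head := hc.bimEq_of_pbEquiv hs hp hg (by omega) φ₁
  have tail := hp cs (d₁ ++ d₂) (fun d hd => hl d (List.mem_cons_of_mem _ hd))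
    (fun d hd => hm d (by simp only [List.mem_append, List.mem_cons] at hd ⊢; tauto))
    (by simp only [List.map_append, List.sum_append]; omega) ⟨φ₂⟩
  exact (head.par_congr tail).trans (BimEq.parList_perm List.perm_middle.symm)

theorem listsComplete (n : ℕ) : SeqListsComplete A n ∧ ParListsComplete A n := by
  induction n with
  | zero => exact ⟨fun _ _ _ _ h => absurd h (Nat.not_lt_zero _),
      fun _ _ _ _ h => absurd h (Nat.not_lt_zero _)⟩
  | succ n ih => exact ⟨seqListsComplete_succ ih.1 ih.2, parListsComplete_succ ih.1 ih.2⟩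

theorem Term.bimEq_of_isoClass_eq {s t : Term A} (h : s.isoClass = t.isoClass) : BimEq s t := by
  obtain ⟨⟨l, hl, hs⟩, -⟩ := s.exists_nf_factors
  obtain ⟨⟨m, hm, ht⟩, -⟩ := t.exists_nf_factors
  have hiso : Iso (semT (seqList l)) (semT (seqList m)) :=
    Quotient.exact (hs.isoClass_eq.symm.trans (h.trans ht.isoClass_eq))
  exact hs.trans (((listsComplete _).1 l m hl hm (Nat.lt_succ_self _)
    (iso_iff_nonempty_pbEquiv.1 hiso)).trans ht.symm)

theorem exists_bseq_of_isoClasses_subset {e f : Term2 A} (h : e.isoClasses ⊆ f.isoClasses) :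
    ∀ x ∈ e.summands.map Term.toTerm2, ∃ y ∈ f.summands.map Term.toTerm2, BSEq x y := by
  rw [Term2.isoClasses_eq_image_summands, Term2.isoClasses_eq_image_summands] at h
  intro _ hx
  obtain ⟨s, hs, rfl⟩ := List.mem_map.1 hx
  obtain ⟨t, ht, hts⟩ := h ⟨s, hs, rfl⟩
  exact ⟨t.toTerm2, List.mem_map_of_mem ht, (Term.bimEq_of_isoClass_eq hts.symm).toTerm2⟩

theorem BSEq.of_isoClasses_eq {e f : Term2 A} (h : e.isoClasses = f.isoClasses) : BSEq e f :=
  (self_sum_summands e).trans ((sum_of_forall_exists (exists_bseq_of_isoClasses_subset h.le)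
    (exists_bseq_of_isoClasses_subset h.ge)).trans (self_sum_summands f).symm)

end

/-- Completeness for sets of pomsets with boxes: `⟦e⟧` and `⟦f⟧` are equal up to
isomorphism iff `e = f` is derivable in the bisemiring-with-boxes theory. -/
theorem bisemiring_completeness (A : Type) (e f : Term2 A) :
    ((∀ P ∈ semT2 e, ∃ Q ∈ semT2 f, Iso P Q) ∧
     (∀ Q ∈ semT2 f, ∃ P ∈ semT2 e, Iso Q P)) ↔ BSEq e f := by
  rw [← image_mk_subset_image_mk_iff, ← image_mk_subset_image_mk_iff, ← subset_antisymm_iff]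
  exact ⟨BSEq.of_isoClasses_eq, BSEq.isoClasses_eq⟩
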